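/- arXiv:math/0401281 — 3 statements merged into one kernel-verified Lean document; each statement's English description precedes it below -/
import Mathlib

section
/- Let Q(t) = t^2 - σ^2 with σ ∈ ℂ. Then for every n ∈ ℕ and Re z > 0, (z^{2n+1}/(2n)!) ∫_0^∞ e^{-zt} Q(t)^n dt = Σ_{b=0}^n [n!(2n-2b)! / ((n-b)!(2n)!)] · (-1)^b (σz)^{2b} / b!. -/
/-!
Expand `(t² - σ²)ⁿ = ∑_b C(n,b) (-σ²)^b t^(2(n-b))` and integrate termwise, using
`L(tᵐ) = m! / z^(m+1)` for `L(f) = ∫₀^∞ e^{-zt} f(t) dt`. Mathlib's Gamma integral only gives this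
for real `z`; for complex `z` it follows by induction from integration by parts,
`z · L(t^(m+1)) = (m+1) · L(tᵐ)`.
-/

open MeasureTheory Set Filter Topology

section Laplace

variable {z : ℂ}

lemma integrableOn_cexp_neg_mul_mul_pow (hz : 0 < z.re) (n : ℕ) :
    IntegrableOn (fun t : ℝ => Complex.exp (-z * t) * (t : ℂ) ^ n) (Ioi 0) := by
  refine Integrable.mono' (integrableOn_rpow_mul_exp_neg_mul_rpow
    (neg_one_lt_zero.trans_le n.cast_nonneg) one_pos hz) (by fun_prop) ?_
  filter_upwards [ae_restrict_mem measurableSet_Ioi] with t (ht : 0 < t)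
  simp [Complex.norm_exp, Complex.mul_re, abs_of_pos ht, mul_comm]

lemma tendsto_cexp_neg_mul_mul_pow_atTop (hz : 0 < z.re) (n : ℕ) :
    Tendsto (fun t : ℝ => Complex.exp (-z * t) * (t : ℂ) ^ n) atTop (𝓝 0) := by
  rw [tendsto_zero_iff_norm_tendsto_zero]
  refine (tendsto_rpow_mul_exp_neg_mul_atTop_nhds_zero n z.re hz).congr' ?_
  filter_upwards [eventually_gt_atTop 0] with t ht
  simp [Complex.norm_exp, Complex.mul_re, abs_of_pos ht, mul_comm]

lemma hasDerivAt_cexp_neg_mul (z : ℂ) (t : ℝ) :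
    HasDerivAt (fun t : ℝ => Complex.exp (-z * t)) (-z * Complex.exp (-z * t)) t := by
  simpa [mul_comm] using (((hasDerivAt_id (t : ℂ)).const_mul (-z)).cexp).comp_ofReal

lemma integral_cexp_neg_mul (hz : 0 < z.re) :
    ∫ t in Ioi (0 : ℝ), Complex.exp (-z * t) = 1 / z := by
  have hint : IntegrableOn (fun t : ℝ => Complex.exp (-z * t)) (Ioi 0) := by
    simpa only [pow_zero, mul_one] using integrableOn_cexp_neg_mul_mul_pow hz 0
  have hlim : Tendsto (fun t : ℝ => Complex.exp (-z * t)) atTop (𝓝 0) := by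
    simpa only [pow_zero, mul_one] using tendsto_cexp_neg_mul_mul_pow_atTop hz 0
  have key := integral_Ioi_of_hasDerivAt_of_tendsto' (fun t _ => hasDerivAt_cexp_neg_mul z t)
    (hint.const_mul (-z)) hlim
  rw [integral_const_mul, Complex.ofReal_zero, mul_zero, Complex.exp_zero, zero_sub] at key
  rw [eq_div_iff (Complex.ne_zero_of_re_pos hz)]
  linear_combination -key

lemma mul_integral_cexp_neg_mul_mul_pow_succ (hz : 0 < z.re) (n : ℕ) :
    z * ∫ t in Ioi (0 : ℝ), Complex.exp (-z * t) * (t : ℂ) ^ (n + 1) =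
      (n + 1) * ∫ t in Ioi (0 : ℝ), Complex.exp (-z * t) * (t : ℂ) ^ n := by
  have hderiv : ∀ t ∈ Ici (0 : ℝ), HasDerivAt
      (fun t : ℝ => Complex.exp (-z * t) * (t : ℂ) ^ (n + 1))
      ((n + 1) * (Complex.exp (-z * t) * (t : ℂ) ^ n) -
        z * (Complex.exp (-z * t) * (t : ℂ) ^ (n + 1))) t := by
    intro t _
    refine ((hasDerivAt_cexp_neg_mul z t).mul
      (by simpa using (hasDerivAt_pow (n + 1) (t : ℂ)).comp_ofReal)).congr_deriv ?_
    ring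
  have hint_n := (integrableOn_cexp_neg_mul_mul_pow hz n).const_mul ((n : ℂ) + 1)
  have hint_succ := (integrableOn_cexp_neg_mul_mul_pow hz (n + 1)).const_mul z
  have key := integral_Ioi_of_hasDerivAt_of_tendsto' hderiv (hint_n.sub hint_succ)
    (tendsto_cexp_neg_mul_mul_pow_atTop hz (n + 1))
  rw [integral_sub hint_n hint_succ, integral_const_mul, integral_const_mul, Complex.ofReal_zero,
    zero_pow n.succ_ne_zero, mul_zero, sub_zero] at key
  linear_combination -key

lemma integral_cexp_neg_mul_mul_pow (hz : 0 < z.re) (n : ℕ) :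
    ∫ t in Ioi (0 : ℝ), Complex.exp (-z * t) * (t : ℂ) ^ n = n.factorial / z ^ (n + 1) := by
  have hz0 := Complex.ne_zero_of_re_pos hz
  induction n with
  | zero => simpa using integral_cexp_neg_mul hz
  | succ n ih =>
    have h := mul_integral_cexp_neg_mul_mul_pow_succ hz n
    rw [ih] at h
    rw [eq_div_iff (pow_ne_zero _ hz0), Nat.factorial_succ, pow_succ']
    field_simp at h ⊢
    push_cast
    linear_combination h

lemma integral_cexp_neg_mul_mul_sq_sub_sq_pow (hz : 0 < z.re) (σ : ℂ) (n : ℕ) :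
    ∫ t in Ioi (0 : ℝ), Complex.exp (-z * t) * ((t : ℂ) ^ 2 - σ ^ 2) ^ n =
      ∑ b ∈ Finset.range (n + 1),
        (-σ ^ 2) ^ b * n.choose b * ((2 * (n - b)).factorial / z ^ (2 * (n - b) + 1)) := by
  have expand : ∀ t : ℝ, Complex.exp (-z * t) * ((t : ℂ) ^ 2 - σ ^ 2) ^ n =
      ∑ b ∈ Finset.range (n + 1),
        (-σ ^ 2) ^ b * n.choose b * (Complex.exp (-z * t) * (t : ℂ) ^ (2 * (n - b))) := by
    intro t
    rw [sub_eq_neg_add, add_pow, Finset.mul_sum]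
    refine Finset.sum_congr rfl fun b _ => ?_
    rw [← pow_mul]
    ring
  simp_rw [expand]
  rw [integral_finsetSum _ fun b _ =>
    (integrableOn_cexp_neg_mul_mul_pow hz _).const_mul _]
  simp_rw [integral_const_mul, integral_cexp_neg_mul_mul_pow hz]

end Laplace

lemma mul_choose_mul_factorial_div_pow_eq (σ z : ℂ) (hz : z ≠ 0) {n b : ℕ} (hb : b ≤ n) :
    z ^ (2 * n + 1) / (2 * n).factorial *
        ((-σ ^ 2) ^ b * n.choose b * ((2 * (n - b)).factorial / z ^ (2 * (n - b) + 1))) =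
      (n.factorial : ℂ) * (2 * n - 2 * b).factorial / ((n - b).factorial * (2 * n).factorial) *
        ((-1) ^ b * (σ * z) ^ (2 * b) / b.factorial) := by
  have hchoose : (n.choose b : ℂ) * b.factorial * (n - b).factorial = n.factorial := by
    exact_mod_cast Nat.choose_mul_factorial_mul_factorial hb
  have hzpow : z ^ (2 * n + 1) = z ^ (2 * b) * z ^ (2 * (n - b) + 1) := by
    rw [← pow_add]
    congr 1
    omega
  have hb_fact : (b.factorial : ℂ) ≠ 0 := by exact_mod_cast b.factorial_ne_zero
  have hnb_fact : ((n - b).factorial : ℂ) ≠ 0 := by exact_mod_cast (n - b).factorial_ne_zero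
  rw [← Nat.mul_sub, ← hchoose, hzpow, neg_pow, mul_pow, pow_mul σ]
  field_simp

/-- For `Q(t) = t² - σ²`:
`(z^(2n+1)/(2n)!) ∫_0^∞ e^{-zt} Q(t)^n dt
  = ∑_{b=0}^n [n!(2n-2b)!/((n-b)!(2n)!)] (-1)^b (σz)^(2b)/b!`. -/
theorem stmt_4 (σ : ℂ) (n : ℕ) (z : ℂ) (hz : 0 < z.re) :
    z ^ (2 * n + 1) / (Nat.factorial (2 * n)) *
      ∫ t in Set.Ioi (0 : ℝ), Complex.exp (-z * t) * ((t : ℂ) ^ 2 - σ ^ 2) ^ n =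
    ∑ b ∈ Finset.range (n + 1),
      ((Nat.factorial n : ℂ) * (Nat.factorial (2 * n - 2 * b)) /
        ((Nat.factorial (n - b)) * (Nat.factorial (2 * n)))) *
        ((-1) ^ b * (σ * z) ^ (2 * b) / (Nat.factorial b)) := by
  rw [integral_cexp_neg_mul_mul_sq_sub_sq_pow hz, Finset.mul_sum]
  exact Finset.sum_congr rfl fun b hb =>
    mul_choose_mul_factorial_div_pow_eq σ z (Complex.ne_zero_of_re_pos hz)
      (Finset.mem_range_succ_iff.mp hb)
end

section
/- Let r_1, ..., r_d ∈ ℂ and μ_k := (1/d) Σ_{i=1}^d r_i^k for k ≥ 0. Then the following are equivalent: (i) r_1 = r_2 = ⋯ = r_d; (ii) μ_j = μ_1^j for all 1 ≤ j ≤ d; (iii) μ_i^j = μ_j^i for all 1 ≤ i, j ≤ d. -/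
/-!
If `μ_j = μ_1 ^ j` for `1 ≤ j ≤ d`, then with `c = μ_1` the families `r` and `(c, …, c)` have the
same power sums up to degree `d`, hence agree on every polynomial of degree `≤ d`. Applied to
`(X - c) ^ j`, this makes the first `d` power sums of `r - c` vanish. By Newton's identities all
elementary symmetric functions of `r - c` then vanish, so `∏ (X - (r_i - c)) = X ^ d` and every
`r_i = c`. The equivalence of (ii) and (iii) is elementary.
-/

open Finset Polynomial

theorem Finset.sum_eval_eq_of_sum_pow_eq {ι R : Type*} [CommRing R] (s : Finset ι) {r t : ι → R}
    {m : ℕ} (h : ∀ k ≤ m, ∑ i ∈ s, r i ^ k = ∑ i ∈ s, t i ^ k) {p : R[X]} (hp : p.natDegree ≤ m) :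
    ∑ i ∈ s, p.eval (r i) = ∑ i ∈ s, p.eval (t i) := by
  simp only [eval_eq_sum_range' (Nat.lt_succ_of_le hp)]
  rw [sum_comm, sum_comm (s := s)]
  refine sum_congr rfl fun k hk => ?_
  rw [← mul_sum, ← mul_sum, h k (Nat.lt_succ_iff.mp (mem_range.mp hk))]

theorem esymm_map_univ_eq_zero_of_sum_pow_eq_zero {σ R : Type*} [Fintype σ] [CommRing R]
    [IsDomain R] [CharZero R] {s : σ → R} {k : ℕ}
    (h : ∀ j, 1 ≤ j → j ≤ k → ∑ i, s i ^ j = 0) (hk : k ≠ 0) :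
    (univ.val.map s).esymm k = 0 := by
  have newton := congrArg (MvPolynomial.aeval s) (MvPolynomial.mul_esymm_eq_sum σ R k)
  simp only [map_mul, map_sum, map_pow, map_neg, map_one, map_natCast,
    MvPolynomial.aeval_esymm_eq_multiset_esymm] at newton
  rw [sum_eq_zero, mul_zero] at newton
  · exact (mul_eq_zero.mp newton).resolve_left (Nat.cast_ne_zero.mpr hk)
  · intro a ha
    rw [mem_filter, HasAntidiagonal.mem_antidiagonal] at ha
    have hpsum : MvPolynomial.aeval s (MvPolynomial.psum σ R a.2) = ∑ i, s i ^ a.2 := by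
      simp [MvPolynomial.psum]
    rw [hpsum, h a.2 (by omega) (by omega), mul_zero]

theorem Multiset.eq_zero_of_esymm_eq_zero {R : Type*} [CommRing R] [IsDomain R] {s : Multiset R}
    (h : ∀ k, 1 ≤ k → k ≤ card s → s.esymm k = 0) {x : R} (hx : x ∈ s) : x = 0 := by
  have vieta : (s.map fun t => X - C t).prod = X ^ card s := by
    rw [prod_X_sub_X_eq_sum_esymm, sum_eq_single 0]
    · simp [Multiset.esymm]
    · intro k hk hk0
      simp [h k (by omega) (Nat.lt_succ_iff.mp (mem_range.mp hk))]
    · simp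
  have hroots := roots_multiset_prod_X_sub_C s
  rw [vieta, roots_X_pow] at hroots
  rw [← hroots] at hx
  simpa using (Multiset.mem_nsmul.mp hx).2

theorem eq_zero_of_sum_pow_eq_zero {σ R : Type*} [Fintype σ] [CommRing R] [IsDomain R]
    [CharZero R] {s : σ → R} (h : ∀ j, 1 ≤ j → j ≤ Fintype.card σ → ∑ i, s i ^ j = 0) (i : σ) :
    s i = 0 := by
  refine Multiset.eq_zero_of_esymm_eq_zero (fun k hk1 hk => ?_)
    (Multiset.mem_map_of_mem s (mem_univ_val i))
  rw [Multiset.card_map, card_val, card_univ] at hk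
  exact esymm_map_univ_eq_zero_of_sum_pow_eq_zero (fun j hj1 hj => h j hj1 (hj.trans hk))
    (by omega)

theorem eq_of_sum_pow_eq_card_mul_pow {σ R : Type*} [Fintype σ] [CommRing R] [IsDomain R]
    [CharZero R] {r : σ → R} {c : R}
    (h : ∀ k, 1 ≤ k → k ≤ Fintype.card σ → ∑ i, r i ^ k = Fintype.card σ * c ^ k) (i : σ) :
    r i = c := by
  have hpow : ∀ k ≤ Fintype.card σ, ∑ i, r i ^ k = ∑ _i : σ, c ^ k := by
    intro k hk
    rcases Nat.eq_zero_or_pos k with rfl | hk0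
    · simp
    · simp [h k hk0 hk]
  refine sub_eq_zero.mp (eq_zero_of_sum_pow_eq_zero (s := fun i => r i - c) (fun j hj1 hj => ?_) i)
  have hdeg : ((X - C c) ^ j).natDegree ≤ Fintype.card σ :=
    (natDegree_pow_le_of_le j (natDegree_X_sub_C_le c)).trans (by simpa using hj)
  simpa [zero_pow (by omega : j ≠ 0)] using sum_eval_eq_of_sum_pow_eq univ hpow hdeg

theorem stmt_13_general (d : ℕ) (r : Fin d → ℂ)
    (μ : ℕ → ℂ) (hμ : ∀ k, μ k = (∑ i, r i ^ k) / d) :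
    ((∀ i j : Fin d, r i = r j) ↔
      (∀ j : ℕ, 1 ≤ j → j ≤ d → μ j = (μ 1) ^ j)) ∧
    ((∀ j : ℕ, 1 ≤ j → j ≤ d → μ j = (μ 1) ^ j) ↔
      (∀ i j : ℕ, 1 ≤ i → i ≤ d → 1 ≤ j → j ≤ d → (μ i) ^ j = (μ j) ^ i)) := by
  refine ⟨⟨fun hr j hj1 hjd => ?_, fun hpow i j => ?_⟩,
    ⟨fun hpow i j hi1 hid hj1 hjd => ?_, fun hsym j hj1 hjd => ?_⟩⟩
  · have hd : (d : ℂ) ≠ 0 := by norm_cast; omega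
    have hconst : ∀ k, μ k = r ⟨0, by omega⟩ ^ k := fun k => by
      simp [hμ, hr _ ⟨0, by omega⟩, hd]
    rw [hconst, hconst, pow_one]
  · have hsum : ∀ k, 1 ≤ k → k ≤ Fintype.card (Fin d) →
        ∑ i, r i ^ k = Fintype.card (Fin d) * μ 1 ^ k := by
      intro k hk1 hkd
      rw [Fintype.card_fin] at hkd ⊢
      rw [← hpow k hk1 hkd, hμ, mul_div_cancel₀ _ (by norm_cast; omega)]
    rw [eq_of_sum_pow_eq_card_mul_pow hsum i, eq_of_sum_pow_eq_card_mul_pow hsum j]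
  · rw [hpow i hi1 hid, hpow j hj1 hjd, ← pow_mul, ← pow_mul, mul_comm]
  · simpa using (hsym 1 j le_rfl (by omega) hj1 hjd).symm

/-- Equivalence of: (i) all `r_i` equal; (ii) `μ_j = μ_1^j` for `1 ≤ j ≤ d`;
(iii) `μ_i^j = μ_j^i` for `1 ≤ i, j ≤ d`, where `μ_k = (1/d) ∑ r_i^k`. -/
theorem stmt_13 (d : ℕ) (hd : 1 ≤ d) (r : Fin d → ℂ)
    (μ : ℕ → ℂ) (hμ : ∀ k, μ k = (∑ i, r i ^ k) / d) :
    ((∀ i j : Fin d, r i = r j) ↔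
      (∀ j : ℕ, 1 ≤ j → j ≤ d → μ j = (μ 1) ^ j)) ∧
    ((∀ j : ℕ, 1 ≤ j → j ≤ d → μ j = (μ 1) ^ j) ↔
      (∀ i j : ℕ, 1 ≤ i → i ≤ d → 1 ≤ j → j ≤ d → (μ i) ^ j = (μ j) ^ i)) :=
  stmt_13_general d r μ hμ
end

section
/- Let Q(t) = t^d + a_{d-2} t^{d-2} + ⋯ + a_0 (no t^{d-1} term), d ≥ 2, and let Q(n, dn - b) denote the coefficient of t^{dn-b} in Q(t)^n. Then there is a constant C(b) depending only on b, d, and max_j |a_j| such that |Q(n, dn - b) / C(dn, dn - b)| ≤ C(b) · n^{⌊b/2⌋ + 1 - b} for all n sufficiently large. In particular Q(n, dn-b)/C(dn, dn-b) → 0 as n → ∞ whenever b ≥ 4. -/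
/-!
Reversing `Q` turns the coefficient of `t^(dn-b)` in `Q^n` into the coefficient of `t^b` in
`R^n`, where `R = t^d Q(1/t) = 1 + t^2 S` because `Q` is monic with no `t^(d-1)` term. By the
binomial theorem this coefficient is `∑_{2k ≤ b} C(n,k) [t^(b-2k)] S^k`, a sum of at most
`⌊b/2⌋ + 1` terms, each `O(n^⌊b/2⌋)` because `|[t^j] S^k| ≤ ‖S‖₁^k`. Dividing by
`C(dn, b) ≥ n^b / b!` gives `O(n^(⌊b/2⌋ - b))`.
-/

open Polynomial Filter Finset Asymptotics

namespace Polynomial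

variable {R : Type*}

theorem reverse_pow [Semiring R] [NoZeroDivisors R] (p : R[X]) (n : ℕ) :
    (p ^ n).reverse = p.reverse ^ n := by
  induction n with
  | zero => rw [pow_zero, pow_zero, ← C_1, reverse_C]
  | succ n ih => rw [pow_succ, reverse_mul_of_domain, ih, pow_succ]

theorem coeff_pow_natDegree_mul_sub [Semiring R] [NoZeroDivisors R] (p : R[X]) {n b : ℕ}
    (hb : b ≤ p.natDegree * n) :
    (p ^ n).coeff (p.natDegree * n - b) = (p.reverse ^ n).coeff b := by
  rw [← reverse_pow, coeff_reverse, natDegree_pow, mul_comm n, revAt_le hb]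

theorem Monic.exists_reverse_eq_one_add_X_sq_mul [Ring R] {p : R[X]} (hp : p.Monic)
    (h : p.nextCoeff = 0) : ∃ S : R[X], p.reverse = 1 + X ^ 2 * S := by
  obtain ⟨S, hS⟩ : X ^ 2 ∣ p.reverse - 1 := by
    refine X_pow_dvd_iff.2 fun i hi => ?_
    interval_cases i
    · simp [hp.leadingCoeff]
    · simp [h, coeff_one]
  exact ⟨S, eq_add_of_sub_eq' hS⟩

section Seminormed

variable [SeminormedRing R]

theorem norm_coeff_mul_le_of_forall_norm_coeff_le (p q : R[X]) {B : ℝ}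
    (hq : ∀ i, ‖q.coeff i‖ ≤ B) (j : ℕ) :
    ‖(p * q).coeff j‖ ≤ (p.sum fun _ a => ‖a‖) * B := by
  have hB : 0 ≤ B := (norm_nonneg _).trans (hq 0)
  rw [coeff_mul]
  calc ‖∑ x ∈ antidiagonal j, p.coeff x.1 * q.coeff x.2‖
      ≤ ∑ x ∈ antidiagonal j, ‖p.coeff x.1‖ * B :=
        norm_sum_le_of_le _ fun x _ =>
          (norm_mul_le _ _).trans (mul_le_mul_of_nonneg_left (hq _) (norm_nonneg _))
    _ = (∑ i ∈ range (j + 1), ‖p.coeff i‖) * B := by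
        rw [Nat.sum_antidiagonal_eq_sum_range_succ_mk, sum_mul]
    _ ≤ (p.sum fun _ a => ‖a‖) * B := by
        rw [p.sum_over_range' (f := fun _ a => ‖a‖) (fun _ => norm_zero)
          (max (j + 1) (p.natDegree + 1)) (by omega)]
        exact mul_le_mul_of_nonneg_right (sum_le_sum_of_subset_of_nonneg
          (range_subset_range.2 (le_max_left ..)) fun i _ _ => norm_nonneg (p.coeff i)) hB

theorem norm_coeff_pow_le [NormOneClass R] (p : R[X]) (k j : ℕ) :
    ‖(p ^ k).coeff j‖ ≤ (p.sum fun _ a => ‖a‖) ^ k := by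
  induction k generalizing j with
  | zero => rw [pow_zero, pow_zero, coeff_one]; split_ifs <;> simp
  | succ k ih => rw [pow_succ', pow_succ']; exact norm_coeff_mul_le_of_forall_norm_coeff_le _ _ ih j

end Seminormed

section SeminormedComm

variable [SeminormedCommRing R] [NormOneClass R]

theorem norm_coeff_X_pow_mul_pow_le (S : R[X]) {m : ℕ} (hm : 0 < m) (k b : ℕ) :
    ‖((X ^ m * S) ^ k).coeff b‖ ≤
      if k ∈ range (b / m + 1) then max 1 (S.sum fun _ a => ‖a‖) ^ (b / m) else 0 := by
  rw [mul_pow, ← pow_mul, coeff_X_pow_mul']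
  set L := S.sum fun _ a => ‖a‖
  have hL : 0 ≤ L := sum_nonneg fun i _ => norm_nonneg (S.coeff i)
  split_ifs with hmk hk hk
  · calc ‖(S ^ k).coeff (b - m * k)‖ ≤ L ^ k := norm_coeff_pow_le S k _
      _ ≤ max 1 L ^ k := pow_le_pow_left₀ hL (le_max_right 1 L) k
      _ ≤ max 1 L ^ (b / m) :=
        pow_le_pow_right₀ (le_max_left _ _) (Nat.lt_succ_iff.1 (mem_range.1 hk))
  · rw [mem_range, Nat.lt_succ_iff, Nat.le_div_iff_mul_le hm, mul_comm] at hk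
    exact absurd hmk hk
  · simp
  · simp

theorem isBigO_coeff_one_add_X_pow_mul_pow (S : R[X]) {m : ℕ} (hm : 0 < m) (b : ℕ) :
    (fun n : ℕ => ((1 + X ^ m * S) ^ n).coeff b) =O[atTop] fun n : ℕ => (n : ℝ) ^ (b / m) := by
  set L := max 1 (S.sum fun _ a => ‖a‖)
  refine IsBigO.of_bound (((b / m + 1 : ℕ) : ℝ) * L ^ (b / m)) ?_
  filter_upwards [eventually_ge_atTop 1] with n hn
  have hterm : ∀ k ∈ range (n + 1),
      ‖((X ^ m * S) ^ k * 1 ^ (n - k) * (n.choose k : R[X])).coeff b‖ ≤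
        if k ∈ range (b / m + 1) then L ^ (b / m) * (n : ℝ) ^ (b / m) else 0 := by
    intro k _
    rw [one_pow, mul_one, coeff_mul_natCast]
    have hcoeff := norm_coeff_X_pow_mul_pow_le S hm k b
    split_ifs at hcoeff ⊢ with hk
    · have hchoose : ‖(n.choose k : R)‖ ≤ (n : ℝ) ^ (b / m) := by
        refine (Nat.norm_cast_le _).trans ?_
        rw [norm_one, mul_one]
        exact_mod_cast (n.choose_le_pow k).trans
          (Nat.pow_le_pow_right hn (Nat.lt_succ_iff.1 (mem_range.1 hk)))
      exact (norm_mul_le _ _).trans (mul_le_mul hcoeff hchoose (norm_nonneg _) (by positivity))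
    · exact (norm_mul_le _ _).trans (mul_nonpos_of_nonpos_of_nonneg hcoeff (norm_nonneg _))
  rw [add_comm, add_pow, finsetSum_coeff, norm_pow, Real.norm_natCast]
  calc _ ≤ _ := norm_sum_le_of_le _ hterm
    _ = ∑ k ∈ range (n + 1) ∩ range (b / m + 1), L ^ (b / m) * (n : ℝ) ^ (b / m) := sum_ite_mem ..
    _ ≤ ((b / m + 1 : ℕ) : ℝ) * L ^ (b / m) * (n : ℝ) ^ (b / m) := by
      rw [sum_const, nsmul_eq_mul, ← mul_assoc]
      gcongr
      exact_mod_cast (card_le_card inter_subset_right).trans (card_range _).le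

theorem Monic.isBigO_coeff_pow_natDegree_mul_sub [NoZeroDivisors R] {p : R[X]} (hp : p.Monic)
    (hdeg : 0 < p.natDegree) (h : p.nextCoeff = 0) (b : ℕ) :
    (fun n : ℕ => (p ^ n).coeff (p.natDegree * n - b)) =O[atTop]
      fun n : ℕ => (n : ℝ) ^ (b / 2) := by
  obtain ⟨S, hS⟩ := hp.exists_reverse_eq_one_add_X_sq_mul h
  refine IsBigO.congr' (isBigO_coeff_one_add_X_pow_mul_pow S two_pos b) ?_ .rfl
  filter_upwards [eventually_ge_atTop b] with n hn
  rw [coeff_pow_natDegree_mul_sub p (hn.trans (Nat.le_mul_of_pos_left n hdeg)), hS]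

end SeminormedComm

end Polynomial

theorem Nat.pow_le_factorial_mul_choose {n m b : ℕ} (h : n + b ≤ m + 1) :
    n ^ b ≤ b.factorial * m.choose b :=
  calc n ^ b ≤ (m + 1 - b) ^ b := Nat.pow_le_pow_left (by omega) b
    _ ≤ m.descFactorial b := m.pow_sub_le_descFactorial b
    _ = b.factorial * m.choose b := m.descFactorial_eq_factorial_mul_choose b

theorem isBigO_inv_choose_mul_sub {𝕜 : Type*} [RCLike 𝕜] {d : ℕ} (hd : 2 ≤ d) (b : ℕ) :
    (fun n : ℕ => (((d * n).choose (d * n - b) : ℕ) : 𝕜)⁻¹) =O[atTop]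
      fun n : ℕ => ((n : ℝ) ^ b)⁻¹ := by
  refine IsBigO.of_bound (b.factorial : ℝ) ?_
  filter_upwards [eventually_ge_atTop (max b 1)] with n hn
  have hbn : b ≤ d * n := by nlinarith [le_max_left b 1]
  have hn1 : (1 : ℝ) ≤ n := by exact_mod_cast (le_max_right b 1).trans hn
  rw [Nat.choose_symm hbn, norm_inv, RCLike.norm_natCast, norm_inv, norm_pow, Real.norm_natCast,
    ← div_eq_mul_inv, inv_eq_one_div, div_le_div_iff₀ (by exact_mod_cast Nat.choose_pos hbn)
    (by positivity), one_mul]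
  exact_mod_cast Nat.pow_le_factorial_mul_choose (by nlinarith [le_max_left b 1])

theorem isBigO_natCast_pow_mul_inv_pow {k b : ℕ} {e : ℤ} (h : (k : ℤ) - b ≤ e) :
    (fun n : ℕ => (n : ℝ) ^ k * ((n : ℝ) ^ b)⁻¹) =O[atTop] fun n : ℕ => (n : ℝ) ^ e := by
  refine IsBigO.of_bound 1 ?_
  filter_upwards [eventually_ge_atTop 1] with n hn
  have hn' : (1 : ℝ) ≤ n := by exact_mod_cast hn
  rw [← zpow_natCast, ← zpow_natCast, ← zpow_neg, ← zpow_add₀ (by positivity), one_mul,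
    Real.norm_of_nonneg (by positivity), Real.norm_of_nonneg (by positivity)]
  exact zpow_le_zpow_right₀ hn' (by omega)

/-- For `Q = t^d + a_{d-2} t^{d-2} + ⋯ + a_0` (monic, no `t^{d-1}` term, `d ≥ 2`)
and fixed `b`, the normalized coefficient `Q(n, dn-b)/C(dn, dn-b)` is
`O(n^{⌊b/2⌋ + 1 - b})` as `n → ∞`; in particular it tends to `0` when `b ≥ 4`. -/
theorem stmt_17 (d b : ℕ) (hd : 2 ≤ d) (Q : Polynomial ℂ) (hQ : Q.Monic)
    (hdeg : Q.natDegree = d) (hcoeff : Q.coeff (d - 1) = 0) :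
    (∃ C : ℝ, 0 ≤ C ∧ ∃ N : ℕ, ∀ n : ℕ, N ≤ n →
      ‖((Q ^ n).coeff (d * n - b) /
          (Nat.choose (d * n) (d * n - b) : ℂ))‖ ≤
        C * (n : ℝ) ^ (((b / 2 : ℕ) : ℤ) + 1 - (b : ℤ))) ∧
    (4 ≤ b → Tendsto
      (fun n : ℕ => (Q ^ n).coeff (d * n - b) /
          (Nat.choose (d * n) (d * n - b) : ℂ))
      atTop (nhds 0)) := by
  subst hdeg
  have hnext : Q.nextCoeff = 0 := by rwa [nextCoeff_of_natDegree_pos (by omega)]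
  have hO : (fun n : ℕ => (Q ^ n).coeff (Q.natDegree * n - b) /
      (Nat.choose (Q.natDegree * n) (Q.natDegree * n - b) : ℂ)) =O[atTop]
        fun n : ℕ => (n : ℝ) ^ (((b / 2 : ℕ) : ℤ) + 1 - (b : ℤ)) := by
    simp_rw [div_eq_mul_inv]
    exact ((hQ.isBigO_coeff_pow_natDegree_mul_sub (by omega) hnext b).mul
      (isBigO_inv_choose_mul_sub hd b)).trans (isBigO_natCast_pow_mul_inv_pow (by omega))
  refine ⟨?_, fun hb => hO.trans_tendsto
    ((tendsto_zpow_atTop_zero (by omega)).comp tendsto_natCast_atTop_atTop)⟩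
  obtain ⟨C, hC, hCO⟩ := hO.exists_nonneg
  obtain ⟨N, hN⟩ := eventually_atTop.1 hCO.bound
  refine ⟨C, hC, N, fun n hn => (hN n hn).trans_eq ?_⟩
  rw [Real.norm_of_nonneg (by positivity)]
end
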